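/- Let A be a real symmetric n×n matrix whose largest eigenvalue λ_max(A) is nonnegative. Then the supremum of A • X over all positive semidefinite n×n matrices X with tr(X) ≤ 1 equals λ_max(A), and it is attained (by X = v vᵀ for a unit-norm eigenvector v corresponding to λ_max(A)). -/

import Mathlib

/-! Diagonalising `A = U diag(λ) Uᴴ` turns `A • X` into `∑ i, λ i * Y i i` with
`Y = Uᴴ X U`, which is again positive semidefinite with the same trace. Hence
`A • X ≤ λ_max tr X ≤ λ_max` (the last step because `λ_max ≥ 0`), and `X = v vᵀ` for a
unit eigenvector `v` of `λ_max` attains the bound. -/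

open Matrix BigOperators

noncomputable def frob {m : Type*} [Fintype m] (A X : Matrix m m ℝ) : ℝ :=
  (Aᵀ * X).trace

noncomputable def lamMax {m : Type*} [Fintype m] [DecidableEq m]
    (A : Matrix m m ℝ) : ℝ :=
  if h : A.IsHermitian then ⨆ i, h.eigenvalues i else 0

section

variable {m : Type*} [Fintype m]

lemma frob_eq_trace_mul_of_isSymm {A : Matrix m m ℝ} (hA : A.IsSymm) (X : Matrix m m ℝ) :
    frob A X = (A * X).trace := by
  rw [frob, hA.eq]

lemma frob_vecMulVec (A : Matrix m m ℝ) (v w : m → ℝ) :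
    frob A (vecMulVec v w) = v ⬝ᵥ (A *ᵥ w) := by
  rw [frob, mul_vecMulVec, trace_vecMulVec, mulVec_transpose, dotProduct_mulVec]

variable [DecidableEq m]

lemma lamMax_of_isEmpty [IsEmpty m] (A : Matrix m m ℝ) : lamMax A = 0 := by
  unfold lamMax
  split_ifs <;> simp

namespace Matrix.IsHermitian

variable {A : Matrix m m ℝ}

lemma lamMax_eq_iSup_eigenvalues (hA : A.IsHermitian) : lamMax A = ⨆ i, hA.eigenvalues i :=
  dif_pos hA

lemma eigenvalues_le_lamMax (hA : A.IsHermitian) (i : m) : hA.eigenvalues i ≤ lamMax A :=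
  hA.lamMax_eq_iSup_eigenvalues ▸ le_ciSup (Set.finite_range _).bddAbove i

lemma exists_eigenvalues_eq_lamMax [Nonempty m] (hA : A.IsHermitian) :
    ∃ i, hA.eigenvalues i = lamMax A :=
  hA.lamMax_eq_iSup_eigenvalues ▸ exists_eq_ciSup_of_finite

lemma dotProduct_eigenvectorBasis_self (hA : A.IsHermitian) (i : m) :
    ⇑(hA.eigenvectorBasis i) ⬝ᵥ ⇑(hA.eigenvectorBasis i) = 1 := by
  have h := orthonormal_iff_ite.mp hA.eigenvectorBasis.orthonormal i i
  rwa [if_pos rfl, EuclideanSpace.inner_eq_star_dotProduct, star_trivial] at h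

lemma frob_vecMulVec_eigenvectorBasis (hA : A.IsHermitian) (i : m) :
    frob A (vecMulVec ⇑(hA.eigenvectorBasis i) ⇑(hA.eigenvectorBasis i)) =
      hA.eigenvalues i := by
  rw [frob_vecMulVec, hA.mulVec_eigenvectorBasis, dotProduct_smul,
    hA.dotProduct_eigenvectorBasis_self, smul_eq_mul, mul_one]

lemma trace_mul_eq_sum_eigenvalues_mul (hA : A.IsHermitian) (X : Matrix m m ℝ) :
    (A * X).trace = ∑ i, hA.eigenvalues i *
      (star (hA.eigenvectorUnitary : Matrix m m ℝ) * X * hA.eigenvectorUnitary) i i := by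
  set U : Matrix m m ℝ := (hA.eigenvectorUnitary : Matrix m m ℝ)
  have hcycle : (A * X).trace = (diagonal hA.eigenvalues * (star U * X * U)).trace := by
    conv_lhs => rw [hA.spectral_theorem, Unitary.conjStarAlgAut_apply]
    rw [Matrix.mul_assoc, Matrix.mul_assoc, trace_mul_comm]
    simp [U, Matrix.mul_assoc]
  rw [hcycle, trace]
  simp only [diag, diagonal_mul]

lemma trace_mul_le_lamMax_mul_trace (hA : A.IsHermitian) {X : Matrix m m ℝ}
    (hX : X.PosSemidef) : (A * X).trace ≤ lamMax A * X.trace := by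
  set U : Matrix m m ℝ := (hA.eigenvectorUnitary : Matrix m m ℝ)
  have hY : (star U * X * U).PosSemidef := hX.conjTranspose_mul_mul_same U
  calc (A * X).trace = ∑ i, hA.eigenvalues i * (star U * X * U) i i :=
        hA.trace_mul_eq_sum_eigenvalues_mul X
    _ ≤ ∑ i, lamMax A * (star U * X * U) i i := by
        gcongr with i
        exacts [hY.diag_nonneg, hA.eigenvalues_le_lamMax i]
    _ = lamMax A * (star U * X * U).trace := by rw [trace, Finset.mul_sum]; rfl
    _ = lamMax A * X.trace := by
        rw [Matrix.mul_assoc, trace_mul_comm, Matrix.mul_assoc,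
          Unitary.mul_star_self_of_mem hA.eigenvectorUnitary.2, Matrix.mul_one]

end Matrix.IsHermitian

end

theorem lamMax_is_greatest_over_spectrahedron_general {n : ℕ}
    (A : Matrix (Fin n) (Fin n) ℝ) (hA : A.IsHermitian) (h0 : 0 ≤ lamMax A) :
    IsGreatest (frob A '' {X : Matrix (Fin n) (Fin n) ℝ | X.PosSemidef ∧ X.trace ≤ 1})
      (lamMax A) := by
  refine ⟨?_, ?_⟩
  · rcases isEmpty_or_nonempty (Fin n) with _ | _
    · exact ⟨0, ⟨PosSemidef.zero, by simp⟩, by simp [frob, lamMax_of_isEmpty]⟩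
    obtain ⟨i, hi⟩ := hA.exists_eigenvalues_eq_lamMax
    set v := ⇑(hA.eigenvectorBasis i)
    refine ⟨vecMulVec v v, ⟨?_, ?_⟩, hi ▸ hA.frob_vecMulVec_eigenvectorBasis i⟩
    · simpa using posSemidef_vecMulVec_self_star v
    · rw [trace_vecMulVec, hA.dotProduct_eigenvectorBasis_self]
  · rintro _ ⟨X, ⟨hX, htr⟩, rfl⟩
    calc frob A X = (A * X).trace := frob_eq_trace_mul_of_isSymm (isHermitian_iff_isSymm.mp hA) X
      _ ≤ lamMax A * X.trace := hA.trace_mul_le_lamMax_mul_trace hX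
      _ ≤ lamMax A := mul_le_of_le_one_right h0 htr

/-- linear optimization over the spectrahedron `{X ⪰ 0, tr X ≤ 1}`
is a maximal eigenvalue computation. -/
theorem lamMax_is_greatest_over_spectrahedron {n : ℕ} (hn : 0 < n)
    (A : Matrix (Fin n) (Fin n) ℝ) (hA : A.IsHermitian) (h0 : 0 ≤ lamMax A) :
    IsGreatest (frob A '' {X : Matrix (Fin n) (Fin n) ℝ | X.PosSemidef ∧ X.trace ≤ 1})
      (lamMax A) :=
  lamMax_is_greatest_over_spectrahedron_general A hA h0
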